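/- Let 1 ≤ d ≤ r and 0 ≤ k ≤ r−1 be integers. Then every entry of the vector g^{r,d}_k is non-negative, and last(g^{r,d}_k) = 0 if and only if either (d is even, d = r and k = 0) or (d = 1 and k > 0). -/

import Mathlib

/-- `vC r d i` is the number of tuples `(u₁,…,u_d) ∈ ℤ^d` with `0 ≤ uₗ ≤ r` for all `l`
and `u₁ + ⋯ + u_d = i`.  For `d = 0` this is `1` if `i = 0` and `0` otherwise. -/
def vC (r d : ℕ) (i : ℤ) : ℕ :=
  (Finset.univ.filter fun u : Fin d → Fin (r + 1) => (∑ l, ((u l : ℕ) : ℤ)) = i).card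

/-- `gHat r d k i` is the `(i+1)`-st entry (`0 ≤ i ≤ ⌊d/2⌋+1`) of the vector
`ĝ^{r,d}_k ∈ ℤ^{⌊d/2⌋+2}`, defined by `g₀ = C(r−1,d,−k)` and
`g_i = C(r−1,d,ir−k) − C(r−1,d,(i−1)r−k)` for `i ≥ 1`; for `k ≥ r` the vector
`ĝ^{r,d}_k` is the zero vector.  The vector `g^{r,d}_k ∈ ℤ^{⌊d/2⌋+1}` is obtained
from `ĝ^{r,d}_k` by deleting its last entry, so its entries are `gHat r d k i`
for `0 ≤ i ≤ ⌊d/2⌋`; `last (g^{r,d}_k) = gHat r d k (d/2)` and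
`last (ĝ^{r,d}_k) = gHat r d k (d/2 + 1)`. -/
def gHat (r d k : ℕ) (i : ℕ) : ℤ :=
  if r ≤ k then 0
  else if i = 0 then (vC (r - 1) d (-(k : ℤ)) : ℤ)
  else (vC (r - 1) d ((i : ℤ) * (r : ℤ) - (k : ℤ)) : ℤ)
       - (vC (r - 1) d (((i : ℤ) - 1) * (r : ℤ) - (k : ℤ)) : ℤ)

/-!
`vC s d j` is the coefficient of `x ^ j` in `(1 + x + ⋯ + x ^ s) ^ d`. This sequence is symmetric
about `d s / 2`, and comparing consecutive coefficients after multiplying by `1 + x + ⋯ + x ^ s`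
shows by induction on `d` that it is unimodal, strictly so when `d ≥ 2`: `vC s d a ≤ vC s d b`
whenever `a ≤ b` and `a + b ≤ d s`, with strict inequality when moreover `0 ≤ b ≤ d s` and `a + b < d s`.
For `1 ≤ i ≤ d / 2` the entry `g_i` compares the coefficients of `C(r-1,d,·)` at `(i-1)r - k` and
`ir - k`, whose sum is at most `d(r-1)` because `d ≤ r`; hence `g_i ≥ 0`. For the last entry this
sum is strictly smaller, so `g_i > 0`, except when `d = r` is even and `k = 0`: then the two
indices are mirror images and `g_i = 0`. For `d = 1` the last entry is `g_0 = C(r-1,1,-k)`.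
-/

section
variable {s d : ℕ}

lemma vC_eq_zero_of_neg {j : ℤ} (hj : j < 0) : vC s d j = 0 := by
  refine Finset.card_eq_zero.2 (Finset.filter_eq_empty_iff.2 fun u _ h => ?_)
  have : (0 : ℤ) ≤ ∑ l, ((u l : ℕ) : ℤ) := Finset.sum_nonneg fun _ _ => Int.natCast_nonneg _
  omega

lemma vC_succ (j : ℤ) : vC s (d + 1) j = ∑ t ∈ Finset.range (s + 1), vC s d (j - t) := by
  rw [← Fin.sum_univ_eq_sum_range (fun t => vC s d (j - t))]
  simp only [vC, Finset.card_filter]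
  rw [← (Fin.consEquiv fun _ => Fin (s + 1)).sum_comp, Fintype.sum_prod_type]
  refine Finset.sum_congr rfl fun t _ => Finset.sum_congr rfl fun v _ => ?_
  simp [Fin.sum_univ_succ, eq_sub_iff_add_eq, add_comm]

lemma vC_symm (j : ℤ) : vC s d (d * s - j) = vC s d j := by
  simp only [vC, Finset.card_filter]
  rw [← (Equiv.piCongrRight fun _ => (Fin.revPerm : Equiv.Perm (Fin (s + 1)))).sum_comp]
  refine Finset.sum_congr rfl fun u _ => ?_
  have hrev : ∑ l, ((Fin.rev (u l) : ℕ) : ℤ) = d * s - ∑ l, ((u l : ℕ) : ℤ) := by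
    have (l : Fin d) : ((Fin.rev (u l) : ℕ) : ℤ) = s - (u l : ℕ) := by
      have := (u l).isLt; rw [Fin.val_rev]; omega
    rw [Finset.sum_congr rfl fun l _ => this l, Finset.sum_sub_distrib]
    simp
  simp only [Equiv.piCongrRight_apply, Pi.map_apply, Fin.revPerm_apply, hrev, sub_right_inj]

lemma vC_succ_add_one (j : ℤ) :
    vC s (d + 1) (j + 1) + vC s d (j - s) = vC s (d + 1) j + vC s d (j + 1) := by
  rw [vC_succ, vC_succ, Finset.sum_range_succ', Finset.sum_range_succ]
  simp only [Nat.cast_add, Nat.cast_one, Nat.cast_zero, sub_zero, add_sub_add_right_eq_sub]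
  ring

lemma exists_vC_eq_of_two_mul_le (b : ℤ) :
    ∃ c, vC s d c = vC s d b ∧ 2 * c ≤ d * s ∧ (c = b ∨ c = d * s - b) := by
  by_cases hb : 2 * b ≤ d * s
  · exact ⟨b, rfl, hb, .inl rfl⟩
  · exact ⟨d * s - b, vC_symm b, by omega, .inr rfl⟩

lemma vC_le_vC_of_forall_le_add_one
    (hstep : ∀ j : ℤ, 2 * j + 1 ≤ d * s → vC s d j ≤ vC s d (j + 1))
    {a b : ℤ} (hab : a ≤ b) (hsum : a + b ≤ d * s) : vC s d a ≤ vC s d b := by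
  have hmono (c : ℤ) (hac : a ≤ c) : 2 * c ≤ d * s → vC s d a ≤ vC s d c := by
    induction c, hac using Int.leInduction with
    | base => exact fun _ => le_rfl
    | succ c _ ih => exact fun hc => (ih (by omega)).trans (hstep c (by omega))
  obtain ⟨c, hc, hcs, hcb⟩ := exists_vC_eq_of_two_mul_le (s := s) (d := d) b
  exact hc ▸ hmono c (by omega) hcs

lemma vC_le_vC_add_one {j : ℤ} (hj : 2 * j + 1 ≤ d * s) : vC s d j ≤ vC s d (j + 1) := by
  induction d generalizing j with
  | zero => simp [vC_eq_zero_of_neg (show j < 0 by simp at hj; omega)]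
  | succ d ih =>
    have := vC_le_vC_of_forall_le_add_one (fun j hj => ih hj)
      (show j - s ≤ j + 1 by omega) (by push_cast at hj; linarith)
    have := vC_succ_add_one (s := s) (d := d) j
    omega

lemma vC_le_vC {a b : ℤ} (hab : a ≤ b) (hsum : a + b ≤ d * s) : vC s d a ≤ vC s d b :=
  vC_le_vC_of_forall_le_add_one (fun _ => vC_le_vC_add_one) hab hsum

lemma vC_pos {j : ℤ} (hj₀ : 0 ≤ j) (hj : j ≤ d * s) : 0 < vC s d j :=
  calc 0 < vC s d 0 := Finset.card_pos.2 ⟨0, by simp⟩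
    _ ≤ vC s d j := vC_le_vC hj₀ (by simpa using hj)

lemma vC_lt_vC_of_forall_lt_add_one
    (hstep : ∀ j : ℤ, -1 ≤ j → 2 * (j + 1) ≤ d * s → vC s d j < vC s d (j + 1))
    {a b : ℤ} (hab : a < b) (hb₀ : 0 ≤ b) (hb : b ≤ d * s) (hsum : a + b < d * s) :
    vC s d a < vC s d b := by
  obtain ⟨c, hc, hcs, hcb⟩ := exists_vC_eq_of_two_mul_le (s := s) (d := d) b
  rw [← hc]
  calc vC s d a ≤ vC s d (c - 1) := vC_le_vC (by omega) (by omega)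
    _ < vC s d (c - 1 + 1) := hstep (c - 1) (by omega) (by omega)
    _ = vC s d c := by rw [sub_add_cancel]

lemma vC_succ_lt_of_lt {j : ℤ} (h : vC s d (j - s) < vC s d (j + 1)) :
    vC s (d + 1) j < vC s (d + 1) (j + 1) := by
  have := vC_succ_add_one (s := s) (d := d) j
  omega

lemma vC_lt_vC_add_one (hd : 2 ≤ d) :
    ∀ j : ℤ, -1 ≤ j → 2 * (j + 1) ≤ d * s → vC s d j < vC s d (j + 1) := by
  induction d, hd using Nat.le_induction with
  | base =>
    intro j hj₀ hj
    refine vC_succ_lt_of_lt (d := 1) ?_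
    rw [vC_eq_zero_of_neg (by omega)]
    exact vC_pos (by omega) (by push_cast; omega)
  | succ d hd ih =>
    intro j hj₀ hj
    have hsd : (s : ℤ) ≤ d * s :=
      le_mul_of_one_le_left (by positivity) (by exact_mod_cast hd.trans' one_le_two)
    push_cast at hj
    exact vC_succ_lt_of_lt (vC_lt_vC_of_forall_lt_add_one ih (by omega) (by omega)
      (by linarith) (by linarith))

lemma vC_lt_vC (hd : 2 ≤ d) {a b : ℤ} (hab : a < b) (hb₀ : 0 ≤ b)
    (hb : b ≤ d * s) (hsum : a + b < d * s) : vC s d a < vC s d b :=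
  vC_lt_vC_of_forall_lt_add_one (vC_lt_vC_add_one hd) hab hb₀ hb hsum

end

section
variable {r d k : ℕ}

lemma gHat_zero (hk : k < r) : gHat r d k 0 = vC (r - 1) d (-k) := by
  simp [gHat, hk.not_ge]

lemma gHat_succ (hk : k < r) (i : ℕ) :
    gHat r d k (i + 1) = vC (r - 1) d ((i + 1) * r - k) - vC (r - 1) d (i * r - k) := by
  simp [gHat, hk.not_ge]

lemma gHat_nonneg (hdr : d ≤ r) (hk : k < r) {i : ℕ} (hi : i ≤ d / 2) : 0 ≤ gHat r d k i := by
  rcases i with _ | i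
  · rw [gHat_zero hk]; positivity
  rw [gHat_succ hk, sub_nonneg, Nat.cast_le]
  have : 2 * (i + 1) * (r : ℤ) ≤ d * r := by gcongr; omega
  refine vC_le_vC (by nlinarith) ?_
  rw [show ((r - 1 : ℕ) : ℤ) = r - 1 by omega]
  nlinarith

lemma gHat_one_zero_eq_zero_iff (hk : k < r) : gHat r 1 k 0 = 0 ↔ 0 < k := by
  rw [gHat_zero hk, Nat.cast_eq_zero]
  rcases k.eq_zero_or_pos with rfl | hk₀
  · simp [(vC_pos (s := r - 1) (d := 1) le_rfl (by positivity)).ne']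
  · simp [vC_eq_zero_of_neg (show -(k : ℤ) < 0 by omega), hk₀]

lemma gHat_two_mul_self_zero (m : ℕ) : gHat (2 * m) (2 * m) 0 m = 0 := by
  rcases m with _ | m
  · simp [gHat]
  rw [gHat_succ (by omega), sub_eq_zero, Nat.cast_inj, ← vC_symm]
  congr 1
  push_cast [Nat.cast_sub (show 1 ≤ 2 * (m + 1) by omega)]
  ring

lemma gHat_half_pos (hd : 2 ≤ d) (hdr : d ≤ r) (hk : k < r)
    (h : ¬(Even d ∧ d = r ∧ k = 0)) : 0 < gHat r d k (d / 2) := by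
  obtain ⟨i, hi⟩ : ∃ i, d / 2 = i + 1 := ⟨d / 2 - 1, by omega⟩
  rw [hi, gHat_succ hk, sub_pos, Nat.cast_lt]
  have hr : ((r - 1 : ℕ) : ℤ) = r - 1 := by omega
  have hsum : (i * r - k : ℤ) + ((i + 1) * r - k) < d * (r - 1 : ℕ) := by
    rw [hr]
    rcases (show d = 2 * (i + 1) ∨ d = 2 * (i + 1) + 1 by omega) with rfl | rfl
    · have : 2 * (i + 1) < r ∨ 0 < k := by
        by_contra! h'
        exact h ⟨even_two_mul _, by omega, by omega⟩
      push_cast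
      rcases this with h' | h' <;> nlinarith
    · push_cast
      nlinarith
  have hb : ((i + 1) * r - k : ℤ) ≤ d * (r - 1 : ℕ) := by
    rw [hr]; nlinarith
  exact vC_lt_vC hd (by nlinarith) (by nlinarith) hb hsum

end

/-- Let `1 ≤ d ≤ r` and `0 ≤ k ≤ r−1`.  Then every entry of `g^{r,d}_k` is non-negative,
and `last(g^{r,d}_k) = 0` if and only if (`d` is even, `d = r` and `k = 0`) or
(`d = 1` and `k > 0`). -/
theorem stmt_12 (r d k : ℕ) (hd : 1 ≤ d) (hdr : d ≤ r) (hk : k ≤ r - 1) :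
    (∀ i : ℕ, i ≤ d / 2 → 0 ≤ gHat r d k i) ∧
    (gHat r d k (d / 2) = 0 ↔ (Even d ∧ d = r ∧ k = 0) ∨ (d = 1 ∧ 0 < k)) := by
  have hkr : k < r := by omega
  refine ⟨fun i hi => gHat_nonneg hdr hkr hi, ?_⟩
  rcases hd.eq_or_lt with rfl | hd
  · simpa using gHat_one_zero_eq_zero_iff hkr
  by_cases h : Even d ∧ d = r ∧ k = 0
  · obtain ⟨⟨m, rfl⟩, rfl, rfl⟩ := h
    simpa [← two_mul] using gHat_two_mul_self_zero m
  · simpa [h, hd.ne'] using (gHat_half_pos hd hdr hkr h).ne'
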